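/- Let f be a homeomorphism of a compact metric space (X,d). If f is expansive and has the shadowing property, then f has the L-shadowing property. -/

import Mathlib

open Metric Filter Set

variable {X : Type*} [MetricSpace X]

/-- The iterate of a homeomorphism by an integer power. -/
def hIter (f : X ≃ₜ X) (k : ℤ) (x : X) : X := (f.toEquiv ^ k) x

/-- The local stable set of `x` of size `c`:
points whose forward iterates stay `c`-close to those of `x`. -/
def localStable (f : X ≃ₜ X) (c : ℝ) (x : X) : Set X :=
  {y | ∀ k : ℕ, dist ((⇑f)^[k] y) ((⇑f)^[k] x) ≤ c}

/-- The local unstable set of `x` of size `c`: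
points whose backward iterates stay `c`-close to those of `x`. -/
def localUnstable (f : X ≃ₜ X) (c : ℝ) (x : X) : Set X :=
  {y | ∀ k : ℕ, dist ((⇑f.symm)^[k] y) ((⇑f.symm)^[k] x) ≤ c}

/-- The stable set of `x`. -/
def stableSet (f : X ≃ₜ X) (x : X) : Set X :=
  {y | Tendsto (fun k : ℕ => dist ((⇑f)^[k] y) ((⇑f)^[k] x)) atTop (nhds 0)}

/-- The unstable set of `x`. -/
def unstableSet (f : X ≃ₜ X) (x : X) : Set X :=
  {y | Tendsto (fun k : ℕ => dist ((⇑f.symm)^[k] y) ((⇑f.symm)^[k] x)) atTop (nhds 0)}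

/-- `f` is positively `n`-expansive: for some `c > 0` every local stable set of
size `c` contains at most `n` points. -/
def PosNExpansive (f : X ≃ₜ X) (n : ℕ) : Prop :=
  ∃ c > 0, ∀ x : X, ∀ S : Finset X, ↑S ⊆ localStable f c x → S.card ≤ n

/-- `f` is `n`-expansive: for some `c > 0` every dynamical ball of size `c`
contains at most `n` points. -/
def NExpansive (f : X ≃ₜ X) (n : ℕ) : Prop :=
  ∃ c > 0, ∀ x : X, ∀ S : Finset X,
    ↑S ⊆ localStable f c x ∩ localUnstable f c x → S.card ≤ n

/-- `f` is expansive. -/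
def Expansive (f : X ≃ₜ X) : Prop :=
  ∃ c > 0, ∀ x y : X, (∀ k : ℤ, dist (hIter f k x) (hIter f k y) ≤ c) → x = y

/-- `(x_k)_{k ∈ ℤ}` is a `δ`-pseudo-orbit. -/
def IsPseudoOrbit (f : X ≃ₜ X) (δ : ℝ) (x : ℤ → X) : Prop :=
  ∀ k : ℤ, dist (f (x k)) (x (k + 1)) < δ

/-- `(x_k)_{k ∈ ℤ}` is a two-sided limit pseudo-orbit:
`d(f(x_k), x_{k+1}) → 0` as `|k| → ∞`. -/
def IsTwoSidedLimitPseudoOrbit (f : X ≃ₜ X) (x : ℤ → X) : Prop :=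
  Tendsto (fun k : ℤ => dist (f (x k)) (x (k + 1))) cofinite (nhds 0)

/-- `z` `ε`-shadows the sequence `(x_k)_{k ∈ ℤ}`. -/
def Shadows (f : X ≃ₜ X) (ε : ℝ) (z : X) (x : ℤ → X) : Prop :=
  ∀ k : ℤ, dist (hIter f k z) (x k) < ε

/-- `z` two-sided limit shadows `(x_k)_{k ∈ ℤ}`. -/
def TwoSidedLimitShadows (f : X ≃ₜ X) (z : X) (x : ℤ → X) : Prop :=
  Tendsto (fun k : ℤ => dist (hIter f k z) (x k)) cofinite (nhds 0)

/-- The shadowing property. -/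
def ShadowingProperty (f : X ≃ₜ X) : Prop :=
  ∀ ε > 0, ∃ δ > 0, ∀ x : ℤ → X, IsPseudoOrbit f δ x → ∃ z : X, Shadows f ε z x

/-- The L-shadowing property. -/
def LShadowingProperty (f : X ≃ₜ X) : Prop :=
  ∀ ε > 0, ∃ δ > 0, ∀ x : ℤ → X, IsPseudoOrbit f δ x →
    IsTwoSidedLimitPseudoOrbit f x →
    ∃ z : X, Shadows f ε z x ∧ TwoSidedLimitShadows f z x

/-- Topological transitivity. -/
def TopTransitive (f : X ≃ₜ X) : Prop :=
  ∀ U V : Set X, IsOpen U → IsOpen V → U.Nonempty → V.Nonempty →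
    ∃ k : ℕ, ((⇑f)^[k] '' U ∩ V).Nonempty

/-- There is a nontrivial finite `ε`-pseudo-orbit from `x` to `y`. -/
def ChainFrom (f : X ≃ₜ X) (ε : ℝ) (x y : X) : Prop :=
  ∃ (l : ℕ) (c : ℕ → X), 0 < l ∧ c 0 = x ∧ c l = y ∧
    ∀ k < l, dist (f (c k)) (c (k + 1)) < ε

/-- `x` is a chain recurrent point of `f`. -/
def ChainRecurrent (f : X ≃ₜ X) (x : X) : Prop :=
  ∀ ε > 0, ChainFrom f ε x x

/-- The chain recurrent class of `x`. -/
def chainClass (f : X ≃ₜ X) (x : X) : Set X :=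
  {y | ∀ ε > 0, ChainFrom f ε x y ∧ ChainFrom f ε y x}

/-- `x` is a periodic point of `f`. -/
def Periodic (f : X ≃ₜ X) (x : X) : Prop :=
  ∃ k : ℕ, 1 ≤ k ∧ (⇑f)^[k] x = x

/-- `x` is a non-wandering point of `f`. -/
def NonWandering (f : X ≃ₜ X) (x : X) : Prop :=
  ∀ U : Set X, IsOpen U → x ∈ U → ∃ k : ℕ, 0 < k ∧ ((⇑f)^[k] '' U ∩ U).Nonempty

/-- The omega limit set of `x`: accumulation points of the forward orbit. -/
def omegaLimitSet (f : X ≃ₜ X) (x : X) : Set X :=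
  {y | ∃ φ : ℕ → ℕ, StrictMono φ ∧ Tendsto (fun n => (⇑f)^[φ n] x) atTop (nhds y)}

/-- `z` two-sided limit shadows `(x_k)` with gap `K`. -/
def TwoSidedLimitShadowsWithGap (f : X ≃ₜ X) (K : ℤ) (z : X) (x : ℤ → X) : Prop :=
  Tendsto (fun k : ℤ => dist (hIter f k z) (x k)) atBot (nhds 0) ∧
  Tendsto (fun k : ℤ => dist (hIter f (K + k) z) (x k)) atTop (nhds 0)

/-! Shadow with precision below the expansivity constant `c`. If the errors `d(f^k z, x_k)` did
not tend to zero, the pairs `(f^k z, (x_{k+j})_j)` would have a cluster point `(p, y)` along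
`|k| → ∞` with `d(f^j p, y_j)` bounded away from zero at `j = 0`. But `y` is a true orbit, since
the jumps of `x` vanish at infinity, and it is `c`-shadowed by `p`, so `p = y_0` by expansivity. -/

open Topology

theorem MapClusterPt.eq_of_tendsto {α Y : Type*} [TopologicalSpace Y] [T2Space Y] {l : Filter α}
    {u : α → Y} {a b : Y} (ha : MapClusterPt a l u) (hb : Tendsto u l (𝓝 b)) : a = b := by
  by_contra hab
  exact (ha.clusterPt.mono hb).ne (disjoint_nhds_nhds.mpr hab).eq_bot

section Dynamics

variable (f : X ≃ₜ X)

lemma hIter_eq_zpow_apply (k : ℤ) (x : X) : hIter f k x = (f ^ k) x := by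
  let toPerm : (X ≃ₜ X) →* Equiv.Perm X := ⟨⟨Homeomorph.toEquiv, rfl⟩, fun _ _ => rfl⟩
  exact congrArg (· x) (map_zpow toPerm f k).symm

lemma hIter_add (m n : ℤ) (x : X) : hIter f (m + n) x = hIter f m (hIter f n x) := by
  simp only [hIter_eq_zpow_apply, zpow_add, Homeomorph.mul_apply]

@[fun_prop]
lemma continuous_hIter (k : ℤ) : Continuous (hIter f k) := by
  simpa only [funext (hIter_eq_zpow_apply f k)] using (f ^ k).continuous

lemma eq_hIter_of_forall_apply_eq {y : ℤ → X} (hy : ∀ j, f (y j) = y (j + 1)) (j : ℤ) :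
    y j = hIter f j (y 0) := by
  induction j using Int.induction_on with
  | zero => simp [hIter_eq_zpow_apply]
  | succ n ih => rw [← hy n, ih, add_comm, hIter_add]; simp [hIter_eq_zpow_apply]
  | pred n ih =>
      rw [← f.symm_apply_apply (y _), hy, sub_add_cancel, ih, sub_eq_neg_add, hIter_add]
      simp [hIter_eq_zpow_apply]

lemma apply_eq_of_mapClusterPt_shift {x : ℤ → X} (hx : IsTwoSidedLimitPseudoOrbit f x)
    {y : ℤ → X} (hy : MapClusterPt y cofinite (fun k j => x (k + j))) (j : ℤ) :
    f (y j) = y (j + 1) := by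
  have hcont : Continuous fun w : ℤ → X => dist (f (w j)) (w (j + 1)) := by fun_prop
  have hlim : Tendsto (fun k => dist (f (x (k + j))) (x (k + (j + 1)))) cofinite (𝓝 0) := by
    simpa only [Function.comp_def, add_assoc] using hx.comp (add_left_injective j).tendsto_cofinite
  exact dist_eq_zero.mp ((hy.continuousAt_comp hcont.continuousAt).eq_of_tendsto hlim)

lemma dist_hIter_le_of_mapClusterPt {c : ℝ} {x : ℤ → X} {z : X}
    (hz : ∀ k, dist (hIter f k z) (x k) ≤ c) {p : X} {y : ℤ → X}
    (hpy : MapClusterPt (p, y) cofinite (fun k => (hIter f k z, fun j => x (k + j)))) (j : ℤ) :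
    dist (hIter f j p) (y j) ≤ c := by
  have hclosed : IsClosed {q : X × (ℤ → X) | dist (hIter f j q.1) (q.2 j) ≤ c} :=
    isClosed_le (by fun_prop) continuous_const
  refine hclosed.mem_of_mapClusterPt hpy (Eventually.of_forall fun k => ?_)
  show dist (hIter f j (hIter f k z)) (x (k + j)) ≤ c
  rw [← hIter_add, add_comm j k]
  exact hz (k + j)

theorem twoSidedLimitShadows_of_forall_dist_le [CompactSpace X] {c : ℝ}
    (hc : ∀ x y : X, (∀ k : ℤ, dist (hIter f k x) (hIter f k y) ≤ c) → x = y)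
    {x : ℤ → X} (hx : IsTwoSidedLimitPseudoOrbit f x) {z : X}
    (hz : ∀ k, dist (hIter f k z) (x k) ≤ c) : TwoSidedLimitShadows f z x := by
  set u : ℤ → X × (ℤ → X) := fun k => (hIter f k z, fun j => x (k + j))
  have hcluster : ∀ q : X × (ℤ → X), MapClusterPt q cofinite u → q.1 = q.2 0 := by
    rintro ⟨p, y⟩ hpy
    have horbit :=
      apply_eq_of_mapClusterPt_shift f hx (hpy.continuousAt_comp continuous_snd.continuousAt)
    refine hc p (y 0) fun j => ?_
    rw [← eq_hIter_of_forall_apply_eq f horbit j]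
    exact dist_hIter_le_of_mapClusterPt f hz hpy j
  have hu : Tendsto u cofinite (𝓝ˢ {q | q.1 = q.2 0}) :=
    isCompact_univ.tendsto_nhdsSet_of_mapClusterPt (Eventually.of_forall fun _ => trivial)
      fun q _ => hcluster q
  have hdist : Continuous fun q : X × (ℤ → X) => dist q.1 (q.2 0) := by fun_prop
  simpa only [TwoSidedLimitShadows, u, Function.comp_def, add_zero] using
    (hdist.tendsto_nhdsSet_nhds fun q (hq : q.1 = q.2 0) => dist_eq_zero.mpr hq).comp hu

end Dynamics

theorem stmt10 {X : Type*} [MetricSpace X] [CompactSpace X] (f : X ≃ₜ X)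
    (hexp : Expansive f) (hshad : ShadowingProperty f) :
    LShadowingProperty f := by
  obtain ⟨c, hc, hexp⟩ := hexp
  intro ε hε
  obtain ⟨δ, hδ, hδshad⟩ := hshad (min ε c) (lt_min hε hc)
  refine ⟨δ, hδ, fun x hpo hlim => ?_⟩
  obtain ⟨z, hz⟩ := hδshad x hpo
  exact ⟨z, fun k => (hz k).trans_le (min_le_left _ _),
    twoSidedLimitShadows_of_forall_dist_le f hexp hlim fun k => (hz k).le.trans (min_le_right _ _)⟩
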